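/- Let H be a closed densely defined operator and suppose there exists a bounded positive operator Θ with bounded inverse such that H*Θ = ΘH. Then H is similar to a self-adjoint operator via a bounded and boundedly invertible transformation; namely, writing Θ = Ω*Ω with Ω bounded and boundedly invertible, the operator h = ΩHΩ⁻¹ is self-adjoint. -/
import Mathlib


variable {E : Type*} [NormedAddCommGroup E] [InnerProductSpace ℂ E] [CompleteSpace E]

/-- `R` is the (bounded, everywhere defined) resolvent of the operator `H` at `z`,
i.e. `R = (H - z)⁻¹`. -/
def IsResolventAt (H : E →ₗ.[ℂ] E) (z : ℂ) (R : E →L[ℂ] E) : Prop :=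
  (∀ x : E, ∃ hx : R x ∈ H.domain, H ⟨R x, hx⟩ - z • R x = x) ∧
    ∀ y : H.domain, R (H y - z • (y : E)) = y

/-- The spectrum of an unbounded operator `H`. -/
def specSet (H : E →ₗ.[ℂ] E) : Set ℂ := {z | ∀ R : E →L[ℂ] E, ¬ IsResolventAt H z R}

/-- The ε-pseudospectrum `σ_ε(H) = σ(H) ∪ {λ : ‖(H-λ)⁻¹‖ > 1/ε}`. -/
def pseudospectrum (ε : ℝ) (H : E →ₗ.[ℂ] E) : Set ℂ :=
  {z | z ∈ specSet H ∨ ∃ R : E →L[ℂ] E, IsResolventAt H z R ∧ ε⁻¹ < ‖R‖}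


/-- The conjugated operator `Ω H Ω⁻¹` with domain `Ω (Dom H)`. -/
noncomputable def conjPMap (Ω : E ≃L[ℂ] E) (H : E →ₗ.[ℂ] E) : E →ₗ.[ℂ] E where
  domain := H.domain.comap Ω.symm.toLinearEquiv.toLinearMap
  toFun := (Ω.toLinearEquiv.toLinearMap.comp H.toFun).comp
    (Ω.symm.toLinearEquiv.toLinearMap.restrict fun _ hx => hx)


open scoped LinearPMap InnerProductSpace
open LinearPMap

omit [CompleteSpace E] in
lemma conjPMap_mem (Ω : E ≃L[ℂ] E) (H : E →ₗ.[ℂ] E) (x : E) :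
    x ∈ (conjPMap Ω H).domain ↔ Ω.symm x ∈ H.domain := Iff.rfl

omit [CompleteSpace E] in
lemma conjPMap_apply (Ω : E ≃L[ℂ] E) (H : E →ₗ.[ℂ] E) (x : (conjPMap Ω H).domain) :
    conjPMap Ω H x = Ω (H ⟨Ω.symm x, x.2⟩) := rfl

/-- If `H` is quasi-self-adjoint with a bounded positive metric `Θ = Ω*Ω` with bounded
inverse, then `h = Ω H Ω⁻¹` is self-adjoint. -/
theorem quasiSelfAdjoint_similar_selfAdjoint (H : E →ₗ.[ℂ] E)
    (hclosed : IsClosed (H.graph : Set (E × E))) (hdense : Dense (H.domain : Set E))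
    (Θ Ω : E ≃L[ℂ] E) (hpos : ContinuousLinearMap.IsPositive (Θ : E →L[ℂ] E))
    (hfact : (ContinuousLinearMap.adjoint (Ω : E →L[ℂ] E)).comp (Ω : E →L[ℂ] E)
      = (Θ : E →L[ℂ] E))
    (hdom : ∀ x : E, ((Θ : E →L[ℂ] E) x ∈ H.adjoint.domain ↔ x ∈ H.domain))
    (hquasi : ∀ x : H.domain, ∃ hm : (Θ : E →L[ℂ] E) (x : E) ∈ H.adjoint.domain,
      H.adjoint ⟨(Θ : E →L[ℂ] E) (x : E), hm⟩ = (Θ : E →L[ℂ] E) (H x)) :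
    IsSelfAdjoint (conjPMap Ω H) := by
  have hΩΩ : ∀ a b : E, ⟪Ω a, Ω b⟫_ℂ = ⟪(Θ : E →L[ℂ] E) a, b⟫_ℂ := by
    intro a b
    have h1 := ContinuousLinearMap.adjoint_inner_left (Ω : E →L[ℂ] E) b ((Ω : E →L[ℂ] E) a)
    rw [← ContinuousLinearMap.comp_apply, hfact] at h1
    simpa using h1.symm
  have hΩstar : ∀ y : E,
      ContinuousLinearMap.adjoint (Ω : E →L[ℂ] E) y = (Θ : E →L[ℂ] E) (Ω.symm y) := by
    intro y
    have := congrArg (fun T : E →L[ℂ] E => T (Ω.symm y)) hfact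
    simpa using this
  have hdense' : Dense ((conjPMap Ω H).domain : Set E) := by
    have : ((conjPMap Ω H).domain : Set E) = Ω.symm ⁻¹' H.domain := rfl
    rw [this]
    exact hdense.preimage Ω.symm.toHomeomorph.isOpenMap
  -- symmetry
  have hsymm : (conjPMap Ω H).IsFormalAdjoint (conjPMap Ω H) := by
    intro x y
    rw [conjPMap_apply, conjPMap_apply]
    set u : H.domain := ⟨Ω.symm x, x.2⟩ with hu
    set v : H.domain := ⟨Ω.symm y, y.2⟩ with hv
    obtain ⟨hm, hq⟩ := hquasi u
    have hx : (x : E) = Ω u := (Ω.apply_symm_apply x).symm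
    have hy : (y : E) = Ω v := (Ω.apply_symm_apply y).symm
    calc ⟪Ω (H u), (y : E)⟫_ℂ = ⟪Ω (H u), Ω v⟫_ℂ := by rw [hy]
      _ = ⟪(Θ : E →L[ℂ] E) (H u), (v : E)⟫_ℂ := hΩΩ _ _
      _ = ⟪H.adjoint ⟨(Θ : E →L[ℂ] E) (u : E), hm⟩, (v : E)⟫_ℂ := by rw [hq]
      _ = ⟪(Θ : E →L[ℂ] E) (u : E), H v⟫_ℂ := adjoint_isFormalAdjoint hdense _ v
      _ = ⟪Ω u, Ω (H v)⟫_ℂ := (hΩΩ _ _).symm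
      _ = ⟪(x : E), Ω (H v)⟫_ℂ := by rw [hx]
  have hle : conjPMap Ω H ≤ (conjPMap Ω H).adjoint := hsymm.le_adjoint hdense'
  have hdomle : (conjPMap Ω H).adjoint.domain ≤ (conjPMap Ω H).domain := by
    intro y hy
    have hcont : Continuous ((innerₛₗ ℂ y).comp (conjPMap Ω H).toFun) :=
      ((conjPMap Ω H).mem_adjoint_domain_iff y).mp hy
    have hmemφ : ∀ u : H.domain, (Ω (u : E)) ∈ (conjPMap Ω H).domain := by
      intro u
      rw [conjPMap_mem]
      simpa using u.2
    have hΩy : ContinuousLinearMap.adjoint (Ω : E →L[ℂ] E) y ∈ H.adjoint.domain := by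
      rw [H.mem_adjoint_domain_iff]
      have heq : ((innerₛₗ ℂ (ContinuousLinearMap.adjoint (Ω : E →L[ℂ] E) y)).comp H.toFun :
          H.domain → ℂ) =
          ((innerₛₗ ℂ y).comp (conjPMap Ω H).toFun) ∘ (fun u : H.domain => (⟨Ω u, hmemφ u⟩ : (conjPMap Ω H).domain)) := by
        funext u
        show ⟪ContinuousLinearMap.adjoint (Ω : E →L[ℂ] E) y, H u⟫_ℂ
          = ⟪y, conjPMap Ω H ⟨Ω (u : E), hmemφ u⟩⟫_ℂ
        rw [ContinuousLinearMap.adjoint_inner_left, conjPMap_apply]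
        have ha : (⟨Ω.symm (((⟨Ω (u : E), hmemφ u⟩ : (conjPMap Ω H).domain) : E)),
            (⟨Ω (u : E), hmemφ u⟩ : (conjPMap Ω H).domain).2⟩ : H.domain) = u :=
          Subtype.ext (by simp)
        rw [ha]
        simp
      rw [heq]
      exact hcont.comp (Continuous.subtype_mk (Ω.continuous.comp continuous_subtype_val) _)
    rw [hΩstar y] at hΩy
    exact (hdom _).mp hΩy
  have : conjPMap Ω H = (conjPMap Ω H).adjoint :=
    eq_of_le_of_domain_eq hle (le_antisymm hle.1 hdomle)
  exact this.symm
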